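/- For the scaled Laguerre recurrence coefficients a_{j,n} = √(j(j+γ))/n and b_{j,n} = (2j+γ+1)/n with fixed γ > −1, the following exact/asymptotic cancellations hold uniformly for j in any window |j−n| ≤ n^{β} with β < 1: (i) a_{j,n} a_{j−2,n} − a_{j−1,n}² = −1/n² + O(n^{−4}); (ii) with x_0 = 0, (b_{j−1,n} − a_{j,n}) a_{j−2,n} − (b_{j−2,n} − a_{j−1,n}) a_{j−1,n} = −γ²/(2n³) + O(n^{β−4}); and (iii) b_{n−1,n} − 2√(a_{n,n} a_{n−1,n}) = (γ²+1)/(4n²) + O(n^{−3}) as n → ∞. -/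

import Mathlib

/-- Scaled Laguerre recurrence coefficient `a_{j,n} = √(j(j+γ))/n`. -/
noncomputable def lagA (γ : ℝ) (j n : ℕ) : ℝ :=
  Real.sqrt ((j : ℝ) * ((j : ℝ) + γ)) / (n : ℝ)

/-- Scaled Laguerre recurrence coefficient `b_{j,n} = (2j+γ+1)/n`. -/
noncomputable def lagB (γ : ℝ) (j n : ℕ) : ℝ :=
  (2 * (j : ℝ) + γ + 1) / (n : ℝ)

open Real Filter Topology

/-!
Centre the indices: with `s = j - 1 + γ/2` and `c = γ²/4` the products `j(j+γ)`,
`(j-1)(j-1+γ)`, `(j-2)(j-2+γ)` become `(s+1)² - c`, `s² - c`, `(s-1)² - c`, and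
`((s+1)² - c)((s-1)² - c) = (s² - c - 1)² - 4c`. So `a_j a_{j-2}` equals `a_{j-1}² - 1/n²` up
to the error of `√` at `(s² - c - 1)²`, which is (i). In (ii), multiplied by `n²`, the terms of
order `s` and `1` cancel once `√(s² - c)` and `√((s-1)² - c)` are expanded to second order,
leaving `-2c/s = -γ²/(2s)`; replacing `s` by `n` costs `|s - n|/n⁴ = O(n^(β-4))`. For (iii) the
same identity with half-steps around `t = n - 1/2 + γ/2` gives `n² a_n a_{n-1} ≈ t² - (γ²+1)/4`,
and a second-order expansion of its square root produces `(γ²+1)/(4n²)`.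
-/

lemma abs_sqrt_sub_le {x a : ℝ} (ha : 0 < a) (hx : 0 ≤ x) : |√x - a| ≤ |x - a ^ 2| / a := by
  have hsum : 0 < √x + a := by positivity
  have key : √x - a = (x - a ^ 2) / (√x + a) := by
    rw [eq_div_iff hsum.ne']
    linear_combination sq_sqrt hx
  rw [key, abs_div, abs_of_pos hsum]
  gcongr
  linarith [sqrt_nonneg x]

lemma abs_sqrt_sub_sub_le {x a : ℝ} (ha : 0 < a) (hx : 0 ≤ x) :
    |√x - a - (x - a ^ 2) / (2 * a)| ≤ (x - a ^ 2) ^ 2 / (2 * a ^ 3) := by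
  have hsum : 0 < √x + a := by positivity
  have key : √x - a - (x - a ^ 2) / (2 * a) = (x - a ^ 2) * (a - √x) / (2 * a * (√x + a)) := by
    field_simp
    linear_combination 2 * a * sq_sqrt hx
  rw [key, abs_div, abs_mul, abs_sub_comm a, abs_of_pos (by positivity : 0 < 2 * a * (√x + a))]
  calc |x - a ^ 2| * |√x - a| / (2 * a * (√x + a))
      ≤ |x - a ^ 2| * (|x - a ^ 2| / a) / (2 * a * a) := by
        gcongr
        · exact abs_sqrt_sub_le ha hx
        · linarith [sqrt_nonneg x]
    _ = (x - a ^ 2) ^ 2 / (2 * a ^ 3) := by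
        rw [← sq_abs (x - a ^ 2)]
        field_simp

lemma abs_sqrt_mul_sqrt_sub_le {t h c : ℝ} (hc : 0 ≤ c) (hm : c ≤ (t - h) ^ 2)
    (hp : c ≤ (t + h) ^ 2) (hA : 0 < t ^ 2 - c - h ^ 2) :
    |√((t + h) ^ 2 - c) * √((t - h) ^ 2 - c) - (t ^ 2 - c - h ^ 2)|
      ≤ 4 * h ^ 2 * c / (t ^ 2 - c - h ^ 2) := by
  have hid : ((t + h) ^ 2 - c) * ((t - h) ^ 2 - c) = (t ^ 2 - c - h ^ 2) ^ 2 - 4 * h ^ 2 * c := by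
    ring
  rw [← sqrt_mul (by linarith)]
  calc _ ≤ |((t + h) ^ 2 - c) * ((t - h) ^ 2 - c) - (t ^ 2 - c - h ^ 2) ^ 2|
          / (t ^ 2 - c - h ^ 2) := abs_sqrt_sub_le hA (mul_nonneg (by linarith) (by linarith))
    _ = _ := by rw [hid, sub_sub_cancel_left, abs_neg, abs_of_nonneg (by positivity)]

section Centred

variable {s c : ℝ}

lemma abs_sqrt_mul_sqrt_sub_le_of_le (hc : 0 ≤ c) (hs : 4 * (c + 1) ≤ s) :
    |√((s + 1) ^ 2 - c) * √((s - 1) ^ 2 - c) - (s ^ 2 - c - 1)| ≤ 5 * c / s ^ 2 := by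
  have hs0 : 0 < s := by linarith
  have hA : 4 / 5 * s ^ 2 ≤ s ^ 2 - c - 1 := by nlinarith
  have h := abs_sqrt_mul_sqrt_sub_le (t := s) (h := 1) hc (by nlinarith) (by nlinarith)
    (by nlinarith)
  rw [one_pow, mul_one] at h
  calc _ ≤ 4 * c / (s ^ 2 - c - 1) := h
    _ ≤ 4 * c / (4 / 5 * s ^ 2) := by gcongr
    _ = 5 * c / s ^ 2 := by field_simp

lemma centred_defect_eq (hs : 1 < s) (hc : c ≤ s ^ 2) :
    (2 * s + 1 - √((s + 1) ^ 2 - c)) * √((s - 1) ^ 2 - c)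
        - (2 * s - 1 - √(s ^ 2 - c)) * √(s ^ 2 - c) + 2 * c / s
      = (2 * s + 1) * (√((s - 1) ^ 2 - c) - (s - 1) - -c / (2 * (s - 1)))
        - (2 * s - 1) * (√(s ^ 2 - c) - s - -c / (2 * s))
        - (√((s + 1) ^ 2 - c) * √((s - 1) ^ 2 - c) - (s ^ 2 - c - 1))
        - 3 * c / (2 * s * (s - 1)) := by
  have hs1 : s - 1 ≠ 0 := by linarith
  have hs0 : s ≠ 0 := by linarith
  field_simp
  linear_combination (2 * s * (s - 1)) * sq_sqrt (sub_nonneg.mpr hc)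

lemma abs_centred_defect_le (hc : 0 ≤ c) (hs : 4 * (c + 1) ≤ s) :
    |(2 * s + 1 - √((s + 1) ^ 2 - c)) * √((s - 1) ^ 2 - c)
        - (2 * s - 1 - √(s ^ 2 - c)) * √(s ^ 2 - c) + 2 * c / s| ≤ 8 * (c + c ^ 2) / s ^ 2 := by
  have hs4 : 4 ≤ s := by linarith
  have hcs : c ≤ (s - 1) ^ 2 := by nlinarith
  have hR₀ := abs_sqrt_sub_sub_le (x := (s - 1) ^ 2 - c) (a := s - 1) (by linarith) (by linarith)
  have hR₁ := abs_sqrt_sub_sub_le (x := s ^ 2 - c) (a := s) (by linarith) (by nlinarith)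
  rw [sub_sub_cancel_left, neg_sq] at hR₀ hR₁
  have hΔ := abs_sqrt_mul_sqrt_sub_le_of_le hc hs
  have hR₀0 : 0 ≤ c ^ 2 / (2 * (s - 1) ^ 3) :=
    div_nonneg (sq_nonneg c) (mul_nonneg zero_le_two (pow_nonneg (by linarith) 3))
  rw [centred_defect_eq (by linarith) (by nlinarith)]
  set R₀ := √((s - 1) ^ 2 - c) - (s - 1) - -c / (2 * (s - 1))
  set R₁ := √(s ^ 2 - c) - s - -c / (2 * s)
  set Δ := √((s + 1) ^ 2 - c) * √((s - 1) ^ 2 - c) - (s ^ 2 - c - 1)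
  have hq : 0 ≤ 3 * c / (2 * s * (s - 1)) := div_nonneg (by linarith) (by nlinarith)
  calc _ ≤ |(2 * s + 1) * R₀| + |(2 * s - 1) * R₁| + |Δ| + |3 * c / (2 * s * (s - 1))| :=
        (abs_sub _ _).trans <| add_le_add
          ((abs_sub _ _).trans (add_le_add (abs_sub _ _) le_rfl)) le_rfl
    _ ≤ (2 * s + 1) * (c ^ 2 / (2 * (s - 1) ^ 3)) + (2 * s - 1) * (c ^ 2 / (2 * s ^ 3))
          + 5 * c / s ^ 2 + 3 * c / (2 * s * (s - 1)) := by
        rw [abs_mul, abs_mul, abs_of_pos (by linarith : 0 < 2 * s + 1),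
          abs_of_pos (by linarith : 0 < 2 * s - 1), abs_of_nonneg hq]
        gcongr
        linarith
    _ ≤ (9 / 4 * s) * (c ^ 2 / (2 * (3 / 4 * s) ^ 3)) + (2 * s) * (c ^ 2 / (2 * s ^ 3))
          + 5 * c / s ^ 2 + 3 * c / (2 * s * (3 / 4 * s)) := by
        gcongr <;> linarith
    _ = (7 * c + 11 / 3 * c ^ 2) / s ^ 2 := by
        field_simp
        ring
    _ ≤ 8 * (c + c ^ 2) / s ^ 2 := by
        gcongr
        nlinarith [sq_nonneg c]

end Centred

lemma abs_two_mul_sub_two_sqrt_sqrt_mul_sqrt_le {t c : ℝ} (hc : 0 ≤ c) (ht : 4 * (c + 1) ≤ t) :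
    |2 * t - 2 * √(√((t + 1 / 2) ^ 2 - c) * √((t - 1 / 2) ^ 2 - c)) - (c + 1 / 4) / t|
      ≤ 6 * (c + 1) ^ 2 / t ^ 3 := by
  have ht0 : 0 < t := by linarith
  have hA : t ^ 2 / 2 ≤ t ^ 2 - c - (1 / 2) ^ 2 := by nlinarith
  set P := √((t + 1 / 2) ^ 2 - c) * √((t - 1 / 2) ^ 2 - c)
  have hPM : |P - (t ^ 2 - c - (1 / 2) ^ 2)| ≤ 2 * c / t ^ 2 :=
    calc _ ≤ 4 * (1 / 2) ^ 2 * c / (t ^ 2 - c - (1 / 2) ^ 2) :=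
          abs_sqrt_mul_sqrt_sub_le hc (by nlinarith) (by nlinarith) (by nlinarith)
      _ ≤ 4 * (1 / 2) ^ 2 * c / (t ^ 2 / 2) := by gcongr
      _ = 2 * c / t ^ 2 := by ring
  have hPt : |P - t ^ 2| ≤ 2 * (c + 1) := by
    have : 2 * c / t ^ 2 ≤ c := by
      rw [div_le_iff₀ (by positivity)]
      nlinarith [mul_le_mul_of_nonneg_left (by nlinarith : 2 ≤ t ^ 2) hc]
    rw [abs_le] at hPM ⊢
    constructor <;> nlinarith
  have hR := abs_sqrt_sub_sub_le ht0 (mul_nonneg (sqrt_nonneg _) (sqrt_nonneg _) : 0 ≤ P)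
  have key : 2 * t - 2 * √P - (c + 1 / 4) / t
      = -2 * (√P - t - (P - t ^ 2) / (2 * t)) - (P - (t ^ 2 - c - (1 / 2) ^ 2)) / t := by
    field_simp
    ring
  rw [key]
  calc _ ≤ |-2 * (√P - t - (P - t ^ 2) / (2 * t))| + |(P - (t ^ 2 - c - (1 / 2) ^ 2)) / t| :=
        abs_sub _ _
    _ ≤ 2 * ((P - t ^ 2) ^ 2 / (2 * t ^ 3)) + 2 * c / t ^ 2 / t := by
        rw [abs_mul, abs_div, abs_of_pos ht0, abs_neg, abs_two]
        gcongr
    _ ≤ 2 * ((2 * (c + 1)) ^ 2 / (2 * t ^ 3)) + 2 * c / t ^ 2 / t := by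
        gcongr 2 * (?_ / _) + _
        exact sq_le_sq' (abs_le.mp hPt).1 (abs_le.mp hPt).2
    _ = (4 * (c + 1) ^ 2 + 2 * c) / t ^ 3 := by
        field_simp
        ring
    _ ≤ 6 * (c + 1) ^ 2 / t ^ 3 := by
        gcongr
        nlinarith

lemma abs_le_one_add_sq (x : ℝ) : |x| ≤ 1 + x ^ 2 := by
  nlinarith [sq_abs x, sq_nonneg (|x| - 1)]

lemma lagA_eq (γ : ℝ) (j n : ℕ) : lagA γ j n = √((j + γ / 2) ^ 2 - γ ^ 2 / 4) / n := by
  rw [lagA]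
  ring_nf

lemma lagB_eq (γ : ℝ) (j n : ℕ) : lagB γ j n = (2 * (j + γ / 2) + 1) / n := by
  rw [lagB]
  ring

section Window

variable {γ : ℝ} {j n : ℕ}

lemma lagA_centred (hj : 2 ≤ j) :
    lagA γ j n = √(((j : ℝ) - 1 + γ / 2 + 1) ^ 2 - γ ^ 2 / 4) / n ∧
    lagA γ (j - 1) n = √(((j : ℝ) - 1 + γ / 2) ^ 2 - γ ^ 2 / 4) / n ∧
    lagA γ (j - 2) n = √(((j : ℝ) - 1 + γ / 2 - 1) ^ 2 - γ ^ 2 / 4) / n := by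
  refine ⟨?_, ?_, ?_⟩ <;> rw [lagA_eq] <;>
    push_cast [Nat.cast_sub (by omega : 1 ≤ j), Nat.cast_sub hj] <;> ring_nf

lemma lagB_centred (hj : 2 ≤ j) :
    lagB γ (j - 1) n = (2 * ((j : ℝ) - 1 + γ / 2) + 1) / n ∧
    lagB γ (j - 2) n = (2 * ((j : ℝ) - 1 + γ / 2) - 1) / n := by
  refine ⟨?_, ?_⟩ <;> rw [lagB_eq] <;>
    push_cast [Nat.cast_sub (by omega : 1 ≤ j), Nat.cast_sub hj] <;> ring_nf

theorem abs_lagA_mul_lagA_sub_sq_add_le (hn : 8 * (1 + γ ^ 2) ≤ n) (hj : 2 ≤ j)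
    (hjn : |(j : ℝ) - n| ≤ n / 4) :
    |lagA γ j n * lagA γ (j - 2) n - lagA γ (j - 1) n ^ 2 - (-1 / (n : ℝ) ^ 2)|
      ≤ 5 * γ ^ 2 / n ^ 4 := by
  obtain ⟨h₂, h₁, h₀⟩ := lagA_centred (γ := γ) (n := n) hj
  set s : ℝ := j - 1 + γ / 2 with hs_def
  have hs : n / 2 ≤ s := by nlinarith [abs_le.mp hjn, sq_nonneg (γ + 1)]
  have hn0 : (0 : ℝ) < n := by nlinarith
  have hcs : γ ^ 2 / 4 ≤ s ^ 2 := by nlinarith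
  have key : lagA γ j n * lagA γ (j - 2) n - lagA γ (j - 1) n ^ 2 - (-1 / (n : ℝ) ^ 2)
      = (√((s + 1) ^ 2 - γ ^ 2 / 4) * √((s - 1) ^ 2 - γ ^ 2 / 4)
          - (s ^ 2 - γ ^ 2 / 4 - 1)) / n ^ 2 := by
    rw [h₂, h₁, h₀, div_pow, sq_sqrt (by linarith)]
    field_simp
    ring
  rw [key, abs_div, abs_of_pos (pow_pos hn0 2)]
  calc _ ≤ 5 * (γ ^ 2 / 4) / s ^ 2 / n ^ 2 := by
        gcongr
        exact abs_sqrt_mul_sqrt_sub_le_of_le (c := γ ^ 2 / 4) (by positivity)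
          (by linarith [sq_nonneg γ])
    _ ≤ 5 * (γ ^ 2 / 4) / (n / 2) ^ 2 / n ^ 2 := by gcongr
    _ = 5 * γ ^ 2 / n ^ 4 := by
        field_simp
        ring

theorem abs_lagB_sub_lagA_mul_sub_le {w : ℝ} (hn : 8 * (1 + γ ^ 2) ≤ n) (hj : 2 ≤ j)
    (hw : 1 ≤ w) (hwn : w ≤ n / 4) (hjn : |(j : ℝ) - n| ≤ w) :
    |(lagB γ (j - 1) n - lagA γ j n) * lagA γ (j - 2) n
        - (lagB γ (j - 2) n - lagA γ (j - 1) n) * lagA γ (j - 1) n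
        - (-(γ ^ 2) / (2 * (n : ℝ) ^ 3))| ≤ 10 * (1 + γ ^ 2) ^ 2 * w / n ^ 4 := by
  obtain ⟨h₂, h₁, h₀⟩ := lagA_centred (γ := γ) (n := n) hj
  obtain ⟨g₁, g₀⟩ := lagB_centred (γ := γ) (n := n) hj
  set s : ℝ := j - 1 + γ / 2 with hs_def
  have hs : n / 2 ≤ s := by nlinarith [abs_le.mp hjn, sq_nonneg (γ + 1)]
  have hn0 : (0 : ℝ) < n := by nlinarith
  have hs0 : 0 < s := by linarith
  have hsn : |s - n| ≤ w + 1 + |γ| / 2 := by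
    rw [hs_def, show (j : ℝ) - 1 + γ / 2 - n = (j - n) + (-1) + γ / 2 by ring]
    refine (abs_add_three _ _ _).trans ?_
    rw [abs_neg, abs_one, abs_div, abs_two]
    linarith
  set E := (2 * s + 1 - √((s + 1) ^ 2 - γ ^ 2 / 4)) * √((s - 1) ^ 2 - γ ^ 2 / 4)
      - (2 * s - 1 - √(s ^ 2 - γ ^ 2 / 4)) * √(s ^ 2 - γ ^ 2 / 4) with hE_def
  have hE : |E + 2 * (γ ^ 2 / 4) / s| ≤ 8 * (γ ^ 2 / 4 + (γ ^ 2 / 4) ^ 2) / s ^ 2 :=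
    abs_centred_defect_le (by positivity) (by linarith [sq_nonneg γ])
  have key : (lagB γ (j - 1) n - lagA γ j n) * lagA γ (j - 2) n
        - (lagB γ (j - 2) n - lagA γ (j - 1) n) * lagA γ (j - 1) n
        - (-(γ ^ 2) / (2 * (n : ℝ) ^ 3))
      = (E + 2 * (γ ^ 2 / 4) / s) / n ^ 2 + γ ^ 2 / 2 * (s - n) / (s * n ^ 3) := by
    rw [h₂, h₁, h₀, g₁, g₀, hE_def]
    field_simp
    ring
  rw [key]
  calc _ ≤ |(E + 2 * (γ ^ 2 / 4) / s) / n ^ 2| + |γ ^ 2 / 2 * (s - n) / (s * n ^ 3)| :=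
        abs_add_le _ _
    _ ≤ 8 * (γ ^ 2 / 4 + (γ ^ 2 / 4) ^ 2) / (n / 2) ^ 2 / n ^ 2
          + γ ^ 2 / 2 * (w + 1 + |γ| / 2) / (n / 2 * n ^ 3) := by
        rw [abs_div, abs_div, abs_mul, abs_of_pos (pow_pos hn0 2),
          abs_of_nonneg (by positivity : 0 ≤ γ ^ 2 / 2), abs_of_pos (by positivity : 0 < s * n ^ 3)]
        gcongr
        exact hE.trans (by gcongr)
    _ = (9 * γ ^ 2 + 2 * γ ^ 4 + γ ^ 2 * w + γ ^ 2 * |γ| / 2) / n ^ 4 := by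
        field_simp
        ring
    _ ≤ 10 * (1 + γ ^ 2) ^ 2 * w / n ^ 4 := by
        have hγ := abs_le_one_add_sq γ
        gcongr
        nlinarith [mul_le_mul_of_nonneg_left hγ (sq_nonneg γ),
          mul_le_mul_of_nonneg_left hw (by positivity : 0 ≤ 11 * γ ^ 2 + 3 * γ ^ 4)]

end Window

theorem abs_lagB_sub_two_sqrt_lagA_mul_sub_le {γ : ℝ} {n : ℕ} (hn : 8 * (1 + γ ^ 2) ≤ n) :
    |lagB γ (n - 1) n - 2 * √(lagA γ n n * lagA γ (n - 1) n) - (γ ^ 2 + 1) / (4 * (n : ℝ) ^ 2)|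
      ≤ 50 * (1 + γ ^ 2) ^ 2 / n ^ 3 := by
  have hn1 : (1 : ℝ) ≤ n := by nlinarith
  have hn0 : (0 : ℝ) < n := by linarith
  set t : ℝ := n - 1 / 2 + γ / 2 with ht_def
  have ht : n / 2 ≤ t := by nlinarith [sq_nonneg (γ + 1)]
  have ht0 : 0 < t := by linarith
  have hA₁ : lagA γ n n = √((t + 1 / 2) ^ 2 - γ ^ 2 / 4) / n := by rw [lagA_eq, ht_def]; ring_nf
  have hA₀ : lagA γ (n - 1) n = √((t - 1 / 2) ^ 2 - γ ^ 2 / 4) / n := by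
    rw [lagA_eq, ht_def]; push_cast [Nat.cast_sub (by exact_mod_cast hn1 : 1 ≤ n)]; ring_nf
  have hB : lagB γ (n - 1) n = 2 * t / n := by
    rw [lagB_eq, ht_def]; push_cast [Nat.cast_sub (by exact_mod_cast hn1 : 1 ≤ n)]; ring_nf
  set P := √((t + 1 / 2) ^ 2 - γ ^ 2 / 4) * √((t - 1 / 2) ^ 2 - γ ^ 2 / 4) with hP_def
  have hP := abs_two_mul_sub_two_sqrt_sqrt_mul_sqrt_le (t := t) (c := γ ^ 2 / 4) (by positivity)
    (by nlinarith)
  rw [← hP_def] at hP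
  have key : lagB γ (n - 1) n - 2 * √(lagA γ n n * lagA γ (n - 1) n)
        - (γ ^ 2 + 1) / (4 * (n : ℝ) ^ 2)
      = (2 * t - 2 * √P - (γ ^ 2 / 4 + 1 / 4) / t) / n
        + (γ ^ 2 / 4 + 1 / 4) * (n - t) / (t * n ^ 2) := by
    rw [hA₁, hA₀, hB, div_mul_div_comm, ← hP_def, sqrt_div' _ (by positivity),
      sqrt_mul_self hn0.le]
    field_simp
    ring
  have hnt : |(n : ℝ) - t| ≤ (1 + |γ|) / 2 := by
    rw [ht_def, show (n : ℝ) - (n - 1 / 2 + γ / 2) = (1 - γ) / 2 by ring, abs_div, abs_two]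
    gcongr
    exact (abs_sub _ _).trans (by rw [abs_one])
  rw [key]
  calc _ ≤ |(2 * t - 2 * √P - (γ ^ 2 / 4 + 1 / 4) / t) / n|
          + |(γ ^ 2 / 4 + 1 / 4) * (n - t) / (t * n ^ 2)| := abs_add_le _ _
    _ ≤ 6 * (γ ^ 2 / 4 + 1) ^ 2 / (n / 2) ^ 3 / n
          + (γ ^ 2 / 4 + 1 / 4) * ((1 + |γ|) / 2) / (n / 2 * n ^ 2) := by
        rw [abs_div, abs_div, abs_mul, abs_of_pos hn0,
          abs_of_pos (by positivity : 0 < t * n ^ 2),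
          abs_of_pos (by positivity : 0 < γ ^ 2 / 4 + 1 / 4)]
        gcongr
        exact hP.trans (by gcongr)
    _ = (48 * (γ ^ 2 / 4 + 1) ^ 2 / n + (γ ^ 2 + 1) * (1 + |γ|) / 4) / n ^ 3 := by
        field_simp
        ring
    _ ≤ 50 * (1 + γ ^ 2) ^ 2 / n ^ 3 := by
        have hγ := abs_le_one_add_sq γ
        have h48 : 48 * (γ ^ 2 / 4 + 1) ^ 2 / n ≤ 48 * (γ ^ 2 / 4 + 1) ^ 2 :=
          div_le_self (by positivity) hn1
        gcongr
        nlinarith [mul_le_mul_of_nonneg_left hγ (by positivity : 0 ≤ γ ^ 2 + 1)]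

lemma eventually_le_and_rpow_le_div_four (L : ℝ) {β : ℝ} (hβ : β < 1) :
    ∀ᶠ n : ℕ in atTop, L ≤ n ∧ (n : ℝ) ^ β ≤ n / 4 := by
  have hlim : Tendsto (fun n : ℕ => (n : ℝ) ^ (β - 1)) atTop (𝓝 0) := by
    simpa [Function.comp_def, neg_sub] using
      (tendsto_rpow_neg_atTop (by linarith : 0 < 1 - β)).comp tendsto_natCast_atTop_atTop
  filter_upwards [tendsto_natCast_atTop_atTop.eventually_ge_atTop L,
    hlim.eventually (ge_mem_nhds (by norm_num : (0 : ℝ) < 1 / 4)), eventually_gt_atTop 0]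
    with n hL hsmall hn
  have hn0 : (0 : ℝ) < n := by exact_mod_cast hn
  refine ⟨hL, ?_⟩
  calc (n : ℝ) ^ β = (n : ℝ) ^ (β - 1) * n := by rw [← rpow_add_one hn0.ne', sub_add_cancel]
    _ ≤ 1 / 4 * n := by gcongr
    _ = n / 4 := by ring

theorem stmt19_general (γ : ℝ) (β : ℝ) (hβ0 : 0 < β) (hβ1 : β < 1) :
    ∃ C > (0 : ℝ), ∃ N₀ : ℕ, ∀ n : ℕ, N₀ ≤ n →
      (∀ j : ℕ, 2 ≤ j → |(j : ℝ) - (n : ℝ)| ≤ (n : ℝ) ^ β →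
        (|lagA γ j n * lagA γ (j - 2) n - lagA γ (j - 1) n ^ 2 - (-1 / (n : ℝ) ^ 2)|
            ≤ C / (n : ℝ) ^ 4 ∧
         |(lagB γ (j - 1) n - lagA γ j n) * lagA γ (j - 2) n
              - (lagB γ (j - 2) n - lagA γ (j - 1) n) * lagA γ (j - 1) n
              - (-(γ ^ 2) / (2 * (n : ℝ) ^ 3))|
            ≤ C * (n : ℝ) ^ (β - 4))) ∧
      |lagB γ (n - 1) n - 2 * Real.sqrt (lagA γ n n * lagA γ (n - 1) n)
          - (γ ^ 2 + 1) / (4 * (n : ℝ) ^ 2)|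
        ≤ C / (n : ℝ) ^ 3 := by
  obtain ⟨N₀, hN₀⟩ :=
    eventually_atTop.mp (eventually_le_and_rpow_le_div_four (8 * (1 + γ ^ 2)) hβ1)
  refine ⟨50 * (1 + γ ^ 2) ^ 2, by positivity, N₀, fun n hn => ?_⟩
  obtain ⟨hnL, hβn⟩ := hN₀ n hn
  have hn1 : (1 : ℝ) ≤ n := by nlinarith
  refine ⟨fun j hj hjn => ⟨?_, ?_⟩, abs_lagB_sub_two_sqrt_lagA_mul_sub_le hnL⟩
  · refine (abs_lagA_mul_lagA_sub_sq_add_le hnL hj (hjn.trans hβn)).trans ?_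
    gcongr ?_ / _
    nlinarith [sq_nonneg γ]
  · rw [rpow_sub (by linarith), rpow_ofNat, ← mul_div_assoc]
    refine (abs_lagB_sub_lagA_mul_sub_le hnL hj (one_le_rpow hn1 hβ0.le) hβn hjn).trans ?_
    gcongr
    norm_num

/-- For the scaled Laguerre recurrence coefficients
`a_{j,n} = √(j(j+γ))/n`, `b_{j,n} = (2j+γ+1)/n` with fixed `γ > −1`, uniformly for `j` in
any window `|j − n| ≤ n^β` with fixed `0 < β < 1`, as `n → ∞`:
(i) `a_{j,n} a_{j−2,n} − a_{j−1,n}² = −1/n² + O(n^{−4})`;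
(ii) with `x₀ = 0`,
`(b_{j−1,n} − a_{j,n}) a_{j−2,n} − (b_{j−2,n} − a_{j−1,n}) a_{j−1,n} = −γ²/(2n³) + O(n^{β−4})`;
(iii) `b_{n−1,n} − 2√(a_{n,n} a_{n−1,n}) = (γ²+1)/(4n²) + O(n^{−3})`. -/
theorem stmt19 (γ : ℝ) (hγ : -1 < γ) (β : ℝ) (hβ0 : 0 < β) (hβ1 : β < 1) :
    ∃ C > (0 : ℝ), ∃ N₀ : ℕ, ∀ n : ℕ, N₀ ≤ n →
      (∀ j : ℕ, 2 ≤ j → |(j : ℝ) - (n : ℝ)| ≤ (n : ℝ) ^ β →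
        (|lagA γ j n * lagA γ (j - 2) n - lagA γ (j - 1) n ^ 2 - (-1 / (n : ℝ) ^ 2)|
            ≤ C / (n : ℝ) ^ 4 ∧
         |(lagB γ (j - 1) n - lagA γ j n) * lagA γ (j - 2) n
              - (lagB γ (j - 2) n - lagA γ (j - 1) n) * lagA γ (j - 1) n
              - (-(γ ^ 2) / (2 * (n : ℝ) ^ 3))|
            ≤ C * (n : ℝ) ^ (β - 4))) ∧
      |lagB γ (n - 1) n - 2 * Real.sqrt (lagA γ n n * lagA γ (n - 1) n)
          - (γ ^ 2 + 1) / (4 * (n : ℝ) ^ 2)|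
        ≤ C / (n : ℝ) ^ 3 :=
  stmt19_general γ β hβ0 hβ1
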